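/- arXiv:2107.02272 — 2 statements merged into one kernel-verified Lean document; each statement's English description precedes it below -/
import Mathlib

section
/- Let R be a commutative ring, let I and J be finitely generated ideals of R, and let M be an R-module. Then the I-power torsion submodule of the J-power torsion submodule of M equals the (I+J)-power torsion submodule of M; that is, Γ_I(Γ_J M) = Γ_{I+J} M as submodules of M. -/
/-! `Γ_I` is detected on the torsion ideal `Ann(x)` of each element, and `Ann(x)` does not
change when `x` is viewed in a submodule. So `Γ_I N = Γ_I M ∩ N`, while
`Γ_{I+J} M = Γ_I M ∩ Γ_J M` because `(I + J)^(n+m) ⊆ Iⁿ + Jᵐ`. -/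

/-- The `I`-power torsion submodule `Γ_I M = {m ∈ M : Iⁿ • m = 0 for some n ≥ 0}`
of an `R`-module `M`, for an ideal `I ⊆ R`. -/
def powerTorsion {R : Type*} [CommRing R] (I : Ideal R) (M : Type*) [AddCommGroup M]
    [Module R M] : Submodule R M :=
  ⨆ n : ℕ, Submodule.torsionBySet R M ((I ^ n : Ideal R) : Set R)

section

variable {R M : Type*} [CommRing R] [AddCommGroup M] [Module R M]

theorem Ideal.torsionOf_submodule_coe (N : Submodule R M) (y : N) :
    Ideal.torsionOf R N y = Ideal.torsionOf R M (y : M) := by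
  ext r
  simp only [Ideal.mem_torsionOf_iff, ← Submodule.coe_eq_zero, Submodule.coe_smul]

theorem mem_powerTorsion_iff (I : Ideal R) (x : M) :
    x ∈ powerTorsion I M ↔ ∃ n : ℕ, I ^ n ≤ Ideal.torsionOf R M x := by
  have hdir : Directed (· ≤ ·) fun n : ℕ =>
      Submodule.torsionBySet R M ((I ^ n : Ideal R) : Set R) := fun a b =>
    ⟨max a b, Submodule.torsionBySet_le_torsionBySet_pow _ _ (le_max_left a b) I,
      Submodule.torsionBySet_le_torsionBySet_pow _ _ (le_max_right a b) I⟩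
  rw [powerTorsion, Submodule.mem_iSup_of_directed _ hdir]
  simp only [Submodule.mem_torsionBySet_iff, Subtype.forall, SetLike.le_def,
    Ideal.mem_torsionOf_iff, SetLike.mem_coe]

theorem map_subtype_powerTorsion (I : Ideal R) (N : Submodule R M) :
    (powerTorsion I N).map N.subtype = powerTorsion I M ⊓ N := by
  ext x
  simp only [Submodule.mem_map, Submodule.subtype_apply, Submodule.mem_inf,
    mem_powerTorsion_iff, Ideal.torsionOf_submodule_coe]
  constructor
  · rintro ⟨y, hy, rfl⟩
    exact ⟨hy, y.2⟩
  · rintro ⟨hx, hxN⟩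
    exact ⟨⟨x, hxN⟩, hx, rfl⟩

theorem powerTorsion_sup (I J : Ideal R) :
    powerTorsion (I ⊔ J) M = powerTorsion I M ⊓ powerTorsion J M := by
  ext x
  simp only [Submodule.mem_inf, mem_powerTorsion_iff]
  constructor
  · rintro ⟨n, hn⟩
    exact ⟨⟨n, (Ideal.pow_right_mono le_sup_left n).trans hn⟩,
      ⟨n, (Ideal.pow_right_mono le_sup_right n).trans hn⟩⟩
  · rintro ⟨⟨n, hn⟩, ⟨m, hm⟩⟩
    exact ⟨n + m, Ideal.sup_pow_add_le_pow_sup_pow.trans (sup_le hn hm)⟩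

end

theorem powerTorsion_powerTorsion_eq_general {R : Type*} [CommRing R] (I J : Ideal R)
    (M : Type*) [AddCommGroup M] [Module R M] :
    (powerTorsion I (powerTorsion J M)).map (powerTorsion J M).subtype
      = powerTorsion (I + J) M := by
  rw [map_subtype_powerTorsion, Submodule.add_eq_sup, powerTorsion_sup]

/-- `Γ_I (Γ_J M) = Γ_{I+J} M` as submodules of `M`, for finitely generated ideals
`I, J` of a commutative ring `R` and any `R`-module `M`. -/
theorem powerTorsion_powerTorsion_eq {R : Type*} [CommRing R] (I J : Ideal R)
    (hI : I.FG) (hJ : J.FG) (M : Type*) [AddCommGroup M] [Module R M] :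
    (powerTorsion I (powerTorsion J M)).map (powerTorsion J M).subtype
      = powerTorsion (I + J) M :=
  powerTorsion_powerTorsion_eq_general I J M
end

section
/- Let N be the ℤ₃[B]-module N = T ⊕ ℤ₃[B]^{⊕4} ⊕ P₁ ⊕ P₂, where T ≅ (ℤ/3)^{⊕8} with B acting as zero on T, and where for k = 1, 2 each P_k is the ℤ₃[B]-module with generators D_k, B_k and single defining relation B·D_k = 3·B_k. Then the B-power torsion submodule of N equals T, and the cokernel of the localization map N → N_B is isomorphic as a ℤ₃[B]-module to (ℤ₃[B, B⁻¹]/ℤ₃[B])^{⊕4} ⊕ Q^{⊕2}, where Q = ℤ₃[B, B⁻¹]/(ℤ₃[B] + ℤ₃·3·B⁻¹). -/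
set_option synthInstance.maxHeartbeats 400000

noncomputable section

/-- `ℤ₃[B]`, the polynomial ring over the 3-adic integers with `B = X`. -/
abbrev S3 : Type _ := Polynomial ℤ_[3]

/-- `ℤ/3` as a `ℤ₃[B]`-module, with `B` acting as zero and `ℤ₃` acting via reduction. -/
instance : Module S3 (ZMod 3) :=
  Module.compHom _ ((PadicInt.toZMod (p := 3)).comp (Polynomial.evalRingHom (0 : ℤ_[3])))

/-- The `ℤ₃[B]`-module `P_k = ℤ₃[B]{D_k, B_k}/(B·D_k = 3·B_k)`. -/
abbrev P3 : Type _ :=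
  (S3 × S3) ⧸ Submodule.span S3 {((Polynomial.X : S3), -(Polynomial.C (3 : ℤ_[3])))}

/-- The basic block `N = T ⊕ ℤ₃[B]⁴ ⊕ P₁ ⊕ P₂` of `π_*(tmf)` at `p = 3`, where
`T ≅ (ℤ/3)⁸` with `B` acting as zero. -/
abbrev N3 : Type _ := (Fin 8 → ZMod 3) × (Fin 4 → S3) × (P3 × P3)

/-- The `B`-power torsion submodule `Γ_B N = {m : Bⁿ • m = 0 for some n}`. -/
def gammaB : Submodule S3 N3 :=
  ⨆ n : ℕ, Submodule.torsionBy S3 N3 ((Polynomial.X : S3) ^ n)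

/-- The localization map `N → N_B`. -/
abbrev locMapN : N3 →ₗ[S3] LocalizedModule (Submonoid.powers (Polynomial.X : S3)) N3 :=
  LocalizedModule.mkLinearMap (Submonoid.powers (Polynomial.X : S3)) N3

/-- The cokernel `N/B^∞` of `N → N_B`. -/
abbrev N3Cok : Type _ :=
  LocalizedModule (Submonoid.powers (Polynomial.X : S3)) N3 ⧸ LinearMap.range locMapN

/-- `ℤ₃[B,B⁻¹]/ℤ₃[B]`. -/
abbrev LPQ3 : Type _ :=
  LaurentPolynomial ℤ_[3] ⧸
    LinearMap.range (Algebra.linearMap S3 (LaurentPolynomial ℤ_[3]))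

/-- `Q = ℤ₃[B,B⁻¹]/(ℤ₃[B] + ℤ₃·3·B⁻¹)`. -/
abbrev Q3 : Type _ :=
  LaurentPolynomial ℤ_[3] ⧸
    Submodule.span S3
      (Set.range (Polynomial.toLaurent : S3 → LaurentPolynomial ℤ_[3]) ∪
        {LaurentPolynomial.C (3 : ℤ_[3]) * LaurentPolynomial.T (-1)})

/-!
The torsion `T` is killed by `B`, and the `B`-torsion free part embeds into `ℤ₃[B,B⁻¹]⁶`:
`ℤ₃[B]` by inclusion and `P_k` by `D_k ↦ 3B⁻¹`, `B_k ↦ 1`, whose kernel is exactly the relation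
`B·D_k = 3·B_k` because `3` is prime and does not divide `B`. The resulting map
`N → ℤ₃[B,B⁻¹]⁶`, zero on `T`, is already a localization at `B`: `B` acts invertibly on the target
and multiplies every element of `N` into the image of a free module. Hence `Γ_B N` is its kernel
`T`, and `N/B^∞` is its cokernel, computed summand by summand; the image of `P_k` is
`ℤ₃[B] + ℤ₃[B]·3B⁻¹`.
-/

namespace IsLocalizedModule

section CommSemiring

variable {R : Type*} [CommSemiring R] (S : Submonoid R) {N M M' : Type*}
  [AddCommMonoid N] [AddCommMonoid M] [AddCommMonoid M'] [Module R N] [Module R M] [Module R M']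

theorem of_comp_of_exists_smul_mem_range (ι : N →ₗ[R] M) (f : M →ₗ[R] M')
    [IsLocalizedModule S (f ∘ₗ ι)] (h : ∀ m : M, ∃ s : S, s • m ∈ LinearMap.range ι) :
    IsLocalizedModule S f where
  map_units := IsLocalizedModule.map_units (f ∘ₗ ι)
  surj y := by
    obtain ⟨⟨n, s⟩, e⟩ := IsLocalizedModule.surj S (f ∘ₗ ι) y
    exact ⟨⟨ι n, s⟩, e⟩
  exists_of_eq {x₁ x₂} e := by
    obtain ⟨s₁, n₁, hn₁⟩ := h x₁
    obtain ⟨s₂, n₂, hn₂⟩ := h x₂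
    have : (f ∘ₗ ι) (s₂ • n₁) = (f ∘ₗ ι) (s₁ • n₂) := by
      simp only [LinearMap.comp_apply, LinearMap.map_smul_of_tower, hn₁, hn₂, e, smul_comm s₂ s₁]
    obtain ⟨c, hc⟩ := IsLocalizedModule.exists_of_eq (S := S) this
    refine ⟨c * s₂ * s₁, ?_⟩
    calc (c * s₂ * s₁) • x₁ = ι (c • s₂ • n₁) := by
          simp only [LinearMap.map_smul_of_tower, hn₁, mul_smul]
      _ = ι (c • s₁ • n₂) := by rw [hc]
      _ = (c * s₂ * s₁) • x₂ := by
          simp only [LinearMap.map_smul_of_tower, hn₂, mul_smul, smul_comm s₂ s₁]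

end CommSemiring

section CommRing

variable {R : Type*} [CommRing R] {M M' : Type*} [AddCommGroup M] [AddCommGroup M']
  [Module R M] [Module R M']

theorem iSup_torsionBy_pow_eq_ker (x : R) (f : M →ₗ[R] M')
    [IsLocalizedModule (Submonoid.powers x) f] :
    ⨆ n : ℕ, Submodule.torsionBy R M (x ^ n) = LinearMap.ker f := by
  have hmono : Monotone fun n : ℕ => Submodule.torsionBy R M (x ^ n) := fun m n hmn =>
    Submodule.torsionBy_le_torsionBy_of_dvd _ _ (pow_dvd_pow x hmn)
  ext m
  simp only [Submodule.mem_iSup_of_directed _ hmono.directed_le, Submodule.mem_torsionBy_iff,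
    mem_ker_iff (Submonoid.powers x), Submonoid.mem_powers_iff,
    exists_exists_eq_and]

variable (S : Submonoid R) (f : M →ₗ[R] M') [IsLocalizedModule S f]

noncomputable def quotRangeMkLinearMapEquiv :
    (LocalizedModule S M ⧸ LinearMap.range (LocalizedModule.mkLinearMap S M)) ≃ₗ[R]
      M' ⧸ LinearMap.range f :=
  Submodule.Quotient.equiv _ _ (iso S f) <| by
    rw [← LinearMap.range_comp]
    congr 1
    ext m
    simp

end CommRing

end IsLocalizedModule

namespace Submodule

variable {R : Type*} [Ring R] {M N : Type*} [AddCommGroup M] [AddCommGroup N]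
  [Module R M] [Module R N]

noncomputable def quotientProdEquiv (p : Submodule R M) (q : Submodule R N) :
    ((M × N) ⧸ p.prod q) ≃ₗ[R] (M ⧸ p) × (N ⧸ q) :=
  (quotEquivOfEq _ _ (by rw [LinearMap.ker_prodMap, ker_mkQ, ker_mkQ])).trans <|
    LinearMap.quotKerEquivOfSurjective (p.mkQ.prodMap q.mkQ) <|
      Prod.map_surjective.2 ⟨p.mkQ_surjective, q.mkQ_surjective⟩

end Submodule

theorem LinearMap.range_piMap {R ι : Type*} [Semiring R] {φ ψ : ι → Type*}
    [∀ i, AddCommMonoid (φ i)] [∀ i, Module R (φ i)] [∀ i, AddCommMonoid (ψ i)]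
    [∀ i, Module R (ψ i)] (f : ∀ i, φ i →ₗ[R] ψ i) :
    range (piMap f) = Submodule.pi Set.univ fun i => range (f i) :=
  SetLike.coe_injective <| by simp only [coe_range, coe_piMap, Set.range_piMap, Submodule.coe_pi]

open Polynomial LaurentPolynomial

local notation "L₃" => LaurentPolynomial ℤ_[3]

theorem Polynomial.exists_eq_smul_of_X_mul_add_C_mul_eq_zero {R : Type*} [CommRing R]
    [IsDomain R] {p : R} (hp : Prime p) {d b : R[X]} (h : X * b + C p * d = 0) :
    ∃ c : R[X], (d, b) = c • (X, -C p) := by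
  have hCp : Prime (C p) := prime_C_iff.2 hp
  have hX : ¬ C p ∣ X := fun hdvd => hp.not_isUnit <| isUnit_of_dvd_one <| by
    simpa using (C_dvd_iff_dvd_coeff _ _).1 hdvd 1
  obtain ⟨c, rfl⟩ : C p ∣ b :=
    (hCp.dvd_or_dvd ⟨-d, by linear_combination h⟩).resolve_left hX
  have hd : d = -(c * X) := by
    have : C p * (X * c + d) = 0 := by linear_combination h
    linear_combination (mul_eq_zero.1 this).resolve_left hCp.ne_zero
  exact ⟨-c, Prod.ext (by simp [hd]) (by simp [mul_comm])⟩

theorem X_smul_zmod_three (z : ZMod 3) : (X : S3) • z = 0 := by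
  show PadicInt.toZMod (eval 0 X) * z = 0
  simp

abbrev relP3 : Submodule S3 (S3 × S3) :=
  Submodule.span S3 {((X : S3), -(Polynomial.C (3 : ℤ_[3])))}

-- `D_k ↦ 3B⁻¹`, `B_k ↦ 1`
def pairToLaurent : (S3 × S3) →ₗ[S3] L₃ :=
  (LinearMap.toSpanSingleton S3 _ (LaurentPolynomial.C 3 * T (-1))).coprod
    (Algebra.linearMap S3 L₃)

theorem toLaurent_X_mul_add_C_mul (d b : S3) :
    toLaurent (X * b + Polynomial.C 3 * d) = T 1 * pairToLaurent (d, b) := by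
  have : (T 1 : L₃) * T (-1) = 1 := by rw [← T_add]; norm_num
  simp only [pairToLaurent, LinearMap.coprod_apply, LinearMap.toSpanSingleton_apply,
    Algebra.smul_def, Algebra.linearMap_apply, algebraMap_eq_toLaurent, map_add, map_mul,
    toLaurent_X, toLaurent_C]
  linear_combination -(LaurentPolynomial.C 3 * toLaurent d) * this

theorem ker_pairToLaurent : LinearMap.ker pairToLaurent = relP3 := by
  refine le_antisymm ?_ ?_
  · rintro ⟨d, b⟩ h
    have hpoly : X * b + Polynomial.C 3 * d = 0 := toLaurent_injective <| by
      rw [toLaurent_X_mul_add_C_mul, LinearMap.mem_ker.1 h, mul_zero, map_zero]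
    obtain ⟨c, hc⟩ := exists_eq_smul_of_X_mul_add_C_mul_eq_zero PadicInt.prime_p hpoly
    exact Submodule.mem_span_singleton.2 ⟨c, hc.symm⟩
  · rw [Submodule.span_le, Set.singleton_subset_iff, SetLike.mem_coe, LinearMap.mem_ker,
      ← (isUnit_T 1).mul_right_eq_zero, ← toLaurent_X_mul_add_C_mul, mul_neg, mul_comm,
      neg_add_cancel, map_zero]

theorem range_pairToLaurent : LinearMap.range pairToLaurent = Submodule.span S3
    (Set.range (toLaurent : S3 → L₃) ∪ {LaurentPolynomial.C 3 * T (-1)}) := by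
  rw [pairToLaurent, LinearMap.range_coprod, LinearMap.range_toSpanSingleton,
    Submodule.span_union, sup_comm]
  congr 1
  have : Set.range (toLaurent : S3 → L₃) = LinearMap.range (Algebra.linearMap S3 L₃) := rfl
  rw [this, Submodule.span_eq]

def p3ToLaurent : P3 →ₗ[S3] L₃ := relP3.liftQ pairToLaurent ker_pairToLaurent.ge

theorem p3ToLaurent_injective : Function.Injective p3ToLaurent :=
  LinearMap.ker_eq_bot.1 <| Submodule.ker_liftQ_eq_bot' _ _ ker_pairToLaurent.symm

instance : IsLocalizedModule (Submonoid.powers X) p3ToLaurent := by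
  let ι : S3 →ₗ[S3] P3 := relP3.mkQ ∘ₗ LinearMap.inr S3 S3 S3
  have hcomp : p3ToLaurent ∘ₗ ι = Algebra.linearMap S3 L₃ := by
    rw [← LinearMap.comp_assoc, p3ToLaurent, Submodule.liftQ_mkQ, pairToLaurent,
      LinearMap.coprod_inr]
  have : IsLocalizedModule (Submonoid.powers X) (p3ToLaurent ∘ₗ ι) := hcomp ▸ inferInstance
  refine IsLocalizedModule.of_comp_of_exists_smul_mem_range _ ι p3ToLaurent fun q => ?_
  obtain ⟨⟨d, b⟩, rfl⟩ := relP3.mkQ_surjective q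
  -- `B • [(d, b)] = [(0, B b + 3 d)]` modulo the relation `d • (B, -3)`
  refine ⟨⟨X, Submonoid.mem_powers X⟩, X * b + Polynomial.C 3 * d, ?_⟩
  rw [LinearMap.comp_apply, Submonoid.smul_def, ← map_smul, Submodule.mkQ_apply,
    Submodule.mkQ_apply, Submodule.Quotient.eq]
  exact Submodule.mem_span_singleton.2 ⟨-d, Prod.ext (by simp [mul_comm]) (by simp; ring)⟩

def freeToLaurent : (Fin 4 → S3) × (P3 × P3) →ₗ[S3] (Fin 4 → L₃) × (L₃ × L₃) :=
  (LinearMap.piMap fun _ => Algebra.linearMap S3 L₃).prodMap (p3ToLaurent.prodMap p3ToLaurent)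

-- `piMap` unfolds to the shape of the `IsLocalizedModule.pi` instance.
instance : IsLocalizedModule (Submonoid.powers X) freeToLaurent :=
  inferInstanceAs (IsLocalizedModule _ ((LinearMap.pi fun _ => _ ∘ₗ LinearMap.proj _).prodMap _))

theorem freeToLaurent_injective : Function.Injective freeToLaurent :=
  Prod.map_injective.2 ⟨.piMap fun _ => toLaurent_injective,
    Prod.map_injective.2 ⟨p3ToLaurent_injective, p3ToLaurent_injective⟩⟩

theorem range_freeToLaurent : LinearMap.range freeToLaurent =
    (Submodule.pi Set.univ fun _ => LinearMap.range (Algebra.linearMap S3 L₃)).prod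
      ((LinearMap.range pairToLaurent).prod (LinearMap.range pairToLaurent)) := by
  rw [freeToLaurent, LinearMap.range_prodMap, LinearMap.range_prodMap, LinearMap.range_piMap,
    p3ToLaurent, Submodule.range_liftQ]

def n3ToLaurent : N3 →ₗ[S3] (Fin 4 → L₃) × (L₃ × L₃) :=
  freeToLaurent ∘ₗ LinearMap.snd S3 _ _

instance : IsLocalizedModule (Submonoid.powers X) n3ToLaurent := by
  have : IsLocalizedModule (Submonoid.powers X) (n3ToLaurent ∘ₗ LinearMap.inr S3 _ _) := by
    rw [n3ToLaurent, LinearMap.comp_assoc, LinearMap.snd_comp_inr, LinearMap.comp_id]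
    infer_instance
  refine IsLocalizedModule.of_comp_of_exists_smul_mem_range _ (LinearMap.inr S3 _ _) n3ToLaurent
    fun ⟨t, m⟩ => ⟨⟨X, Submonoid.mem_powers X⟩, (X : S3) • m, ?_⟩
  rw [Submonoid.smul_def]
  exact Prod.ext (funext fun i => (X_smul_zmod_three (t i)).symm) rfl

theorem ker_n3ToLaurent :
    LinearMap.ker n3ToLaurent = (⊤ : Submodule S3 (Fin 8 → ZMod 3)).prod ⊥ := by
  rw [n3ToLaurent, LinearMap.ker_comp, LinearMap.ker_eq_bot.2 freeToLaurent_injective]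
  ext
  simp

theorem gammaB_eq_prod : gammaB = (⊤ : Submodule S3 (Fin 8 → ZMod 3)).prod
    (((⊥ : Submodule S3 (Fin 4 → S3))).prod (⊥ : Submodule S3 (P3 × P3))) := by
  rw [Submodule.prod_bot, ← ker_n3ToLaurent]
  exact IsLocalizedModule.iSup_torsionBy_pow_eq_ker X n3ToLaurent

def n3CokEquiv : N3Cok ≃ₗ[S3] (Fin 4 → LPQ3) × (Fin 2 → Q3) :=
  have hrange : LinearMap.range n3ToLaurent = LinearMap.range freeToLaurent :=
    LinearMap.range_comp_of_range_eq_top _ Submodule.range_snd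
  (IsLocalizedModule.quotRangeMkLinearMapEquiv _ n3ToLaurent).trans <|
    (Submodule.quotEquivOfEq _ _ <| by
      rw [hrange, range_freeToLaurent, range_pairToLaurent]).trans <|
    (Submodule.quotientProdEquiv _ _).trans <|
    (Submodule.quotientPi _).prodCongr <|
      (Submodule.quotientProdEquiv _ _).trans (LinearEquiv.piFinTwo S3 fun _ => Q3).symm

/-- For the basic block `N = T ⊕ ℤ₃[B]⁴ ⊕ P₁ ⊕ P₂` at `p = 3`: the `B`-power torsion
submodule of `N` equals `T`, and the cokernel of `N → N_B` is isomorphic as a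
`ℤ₃[B]`-module to `(ℤ₃[B,B⁻¹]/ℤ₃[B])⁴ ⊕ Q²` with `Q = ℤ₃[B,B⁻¹]/(ℤ₃[B] + ℤ₃·3·B⁻¹)`. -/
theorem N3_torsion_and_cok :
    gammaB = (⊤ : Submodule S3 (Fin 8 → ZMod 3)).prod
        (((⊥ : Submodule S3 (Fin 4 → S3))).prod (⊥ : Submodule S3 (P3 × P3))) ∧
    Nonempty (N3Cok ≃ₗ[S3] (Fin 4 → LPQ3) × (Fin 2 → Q3)) :=
  ⟨gammaB_eq_prod, ⟨n3CokEquiv⟩⟩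

end
end
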